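/- A bounded perturbation of the signed squares is never a Menshov spectrum: if (a_k)_{k≥1} and (b_k)_{k≥1} are integer sequences such that sup_k |a_k − k²| < ∞ and sup_k |b_k + k²| < ∞, then the set Λ = {a_k : k ≥ 1} ∪ {b_k : k ≥ 1} is not a Menshov spectrum, i.e., there exists f ∈ L⁰(𝕋) which admits no representation f(t) = ∑_{k∈Λ} c_k e^{ikt} with symmetric partial sums converging almost everywhere. -/

import Mathlib

open MeasureTheory Filter Topology Real

instance : Fact (0 < 2 * π) := ⟨by positivity⟩

/-- The symmetric partial sum `S_N(t) = ∑_{k ∈ Λ, |k| ≤ N} c_k e^{ikt}` on the circle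
`𝕋 = ℝ/2πℤ`. -/
noncomputable def menshovPartialSum (Λ : Set ℤ) (c : ℤ → ℂ) (N : ℕ)
    (t : AddCircle (2 * π)) : ℂ :=
  ∑ k ∈ Finset.Icc (-(N : ℤ)) (N : ℤ), Λ.indicator c k * fourier k t

/-- A set `Λ ⊆ ℤ` is a Menshov spectrum if every measurable `f : 𝕋 → ℂ` admits a
representation `f(t) = ∑_{k ∈ Λ} c_k e^{ikt}` with symmetric partial sums converging
almost everywhere. -/
def IsMenshovSpectrum (Λ : Set ℤ) : Prop :=
  ∀ f : AddCircle (2 * π) → ℂ, Measurable f → ∃ c : ℤ → ℂ,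
    ∀ᵐ t : AddCircle (2 * π),
      Tendsto (fun N => menshovPartialSum Λ c N t) atTop (𝓝 (f t))

lemma exists_avoiding (s : Finset (Bool × ℤ)) :
    ∃ q : ℕ, 0 < q ∧ ∃ r₀ : ℤ,
      ∀ pat ∈ s, ∀ k : ℤ,
        ((if pat.1 then k ^ 2 + pat.2 else -k ^ 2 + pat.2 : ℤ) : ZMod q) ≠ (r₀ : ZMod q) := by
  classical
  induction s using Finset.induction_on with
  | empty => exact ⟨1, one_pos, 0, by simp⟩
  | @insert pat s hpat ih =>
    obtain ⟨σ, d⟩ := pat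
    obtain ⟨q, hq, r₀, h⟩ := ih
    obtain ⟨p, hpge, hp⟩ := Nat.exists_infinite_primes (max (q + 1) 3)
    have hq_lt : q < p := by have := le_trans (le_max_left (q+1) 3) hpge; omega
    have hp3 : 3 ≤ p := le_trans (le_max_right (q+1) 3) hpge
    haveI : Fact p.Prime := ⟨hp⟩
    haveI : NeZero q := ⟨hq.ne'⟩
    have hchar : ringChar (ZMod p) ≠ 2 := by rw [ZMod.ringChar_zmod_n]; omega
    obtain ⟨u, hu⟩ := FiniteField.exists_nonsquare hchar
    have hco : Nat.Coprime q p :=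
      ((hp.coprime_iff_not_dvd).mpr (fun hd => absurd (Nat.le_of_dvd hq hd) (by omega))).symm
    set t : ZMod p := (d : ZMod p) + (if σ then u else -u) with ht
    obtain ⟨r, hr1, hr2⟩ := Nat.chineseRemainder hco ((r₀ : ZMod q)).val t.val
    refine ⟨q * p, Nat.mul_pos hq hp.pos, (r : ℤ), ?_⟩
    have hrq : (((r : ℕ) : ℤ) : ZMod q) = (r₀ : ZMod q) := by
      push_cast
      rw [(ZMod.natCast_eq_natCast_iff _ _ _).mpr hr1]
      simp [ZMod.natCast_val, ZMod.cast_id]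
    have hrp : (((r : ℕ) : ℤ) : ZMod p) = t := by
      push_cast
      rw [(ZMod.natCast_eq_natCast_iff _ _ _).mpr hr2]
      simp [ZMod.natCast_val, ZMod.cast_id]
    intro pat' hmem k
    rcases Finset.mem_insert.mp hmem with hcase | hcase
    · subst hcase
      intro heq
      have h1 : ((if σ then k ^ 2 + d else -k ^ 2 + d : ℤ) : ZMod p) = t := by
        have := congrArg (ZMod.castHom (dvd_mul_left p q) (ZMod p)) heq
        rwa [map_intCast, map_intCast, hrp] at this
      rw [ht] at h1
      cases σ <;> simp only [if_true, if_false, Bool.false_eq_true, cond] at h1 <;> push_cast at h1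
      · exact hu ⟨(k : ZMod p), by linear_combination h1⟩
      · exact hu ⟨(k : ZMod p), by linear_combination -h1⟩
    · intro heq
      have h1 : ((if pat'.1 then k ^ 2 + pat'.2 else -k ^ 2 + pat'.2 : ℤ) : ZMod q) = (r₀ : ZMod q) := by
        have := congrArg (ZMod.castHom (dvd_mul_right q p) (ZMod q)) heq
        rwa [map_intCast, map_intCast, hrq] at this
      exact h pat' hcase k h1

lemma fourier_real (k : ℤ) (x : ℝ) :
    (fourier k (x : AddCircle (2*π)) : ℂ) = Complex.exp (Complex.I * (k * x)) := by
  rw [fourier_coe_apply]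
  congr 1
  have h : (π : ℂ) ≠ 0 := by exact_mod_cast Real.pi_ne_zero
  push_cast
  field_simp

lemma weighted_sum_zero (Λ : Set ℤ) (c : ℤ → ℂ) (q : ℕ) (hq : 0 < q) (r₀ : ℤ)
    (hΛ : ∀ m : ℤ, m ∈ Λ → ((m : ZMod q) ≠ (r₀ : ZMod q)))
    (N : ℕ) (t : AddCircle (2 * π)) :
    ∑ j ∈ Finset.range q, Complex.exp (-(2 * π * Complex.I * r₀ * j / q)) *
      menshovPartialSum Λ c N (t + ((2 * π * j / q : ℝ) : AddCircle (2 * π))) = 0 := by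
  have hqC : (q : ℂ) ≠ 0 := Nat.cast_ne_zero.mpr hq.ne'
  have hπ : (π : ℂ) ≠ 0 := by exact_mod_cast Real.pi_ne_zero
  induction t using QuotientAddGroup.induction_on with
  | H x =>
  unfold menshovPartialSum
  simp only [Finset.mul_sum]
  rw [Finset.sum_comm]
  refine Finset.sum_eq_zero (fun k _ => ?_)
  by_cases hk : ((k : ZMod q) = (r₀ : ZMod q))
  · have hnot : k ∉ Λ := fun hmem => hΛ k hmem hk
    simp [Set.indicator_of_notMem hnot]
  · -- each term equals ind * exp(I k x) * z^j with z = exp(2πI(k-r₀)/q)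
    set z : ℂ := Complex.exp (2 * π * Complex.I * ((k : ℂ) - r₀) / q) with hz
    have hterm : ∀ j ∈ Finset.range q,
        Complex.exp (-(2 * π * Complex.I * r₀ * j / q)) *
          (Λ.indicator c k * fourier k ((x : AddCircle (2*π)) + ((2 * π * j / q : ℝ) : AddCircle (2*π))))
        = Λ.indicator c k * Complex.exp (Complex.I * (k * x)) * z ^ j := by
      intro j _
      have hco : (x : AddCircle (2*π)) + ((2 * π * j / q : ℝ) : AddCircle (2*π))
          = ((x + 2 * π * j / q : ℝ) : AddCircle (2*π)) := rfl
      have e1 : Complex.exp (-(2 * π * Complex.I * r₀ * j / q)) *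
          Complex.exp (Complex.I * (k * (x + 2 * π * j / q : ℝ))) =
          Complex.exp (Complex.I * (k * x)) * z ^ j := by
        rw [hz, ← Complex.exp_nat_mul, ← Complex.exp_add, ← Complex.exp_add]
        congr 1
        push_cast
        field_simp
        ring
      rw [hco, fourier_real]
      linear_combination Λ.indicator c k * e1
    have hzne : z ≠ 1 := by
      intro h1
      obtain ⟨n, hn⟩ := Complex.exp_eq_one_iff.mp (hz ▸ h1)
      have h2πI : (2 * (π : ℂ) * Complex.I) ≠ 0 := by
        simp [Complex.I_ne_zero, hπ]
      have h2 : ((k : ℂ) - r₀) = n * q := by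
        apply mul_left_cancel₀ h2πI
        field_simp at hn
        linear_combination (2 * (π : ℂ) * Complex.I) * hn
      have h3 : (k : ℤ) - r₀ = n * q := by exact_mod_cast h2
      apply hk
      rw [ZMod.intCast_eq_intCast_iff]
      exact Int.ModEq.symm (Int.modEq_iff_dvd.mpr ⟨n, by linear_combination h3⟩)
    have hzq : z ^ q = 1 := by
      rw [hz, ← Complex.exp_nat_mul]
      have he : (q : ℂ) * (2 * π * Complex.I * ((k:ℂ) - r₀) / q) = ((k - r₀ : ℤ) : ℂ) * (2 * π * Complex.I) := by
        push_cast
        field_simp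
      rw [he, Complex.exp_int_mul_two_pi_mul_I]
    rw [Finset.sum_congr rfl hterm, ← Finset.mul_sum, geom_sum_eq hzne, hzq]
    simp

/-- **Sharpness of Theorem 2**: a bounded perturbation of the signed squares is never a
Menshov spectrum. -/
theorem not_menshov_spectrum_bounded_perturbation_of_squares (a b : ℕ → ℤ)
    (ha : ∃ C : ℝ, ∀ k : ℕ, 1 ≤ k → (|a k - (k : ℤ) ^ 2| : ℝ) ≤ C)
    (hb : ∃ C : ℝ, ∀ k : ℕ, 1 ≤ k → (|b k + (k : ℤ) ^ 2| : ℝ) ≤ C) :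
    ¬ IsMenshovSpectrum (a '' {k : ℕ | 1 ≤ k} ∪ b '' {k : ℕ | 1 ≤ k}) := by

  obtain ⟨Ca, hCa⟩ := ha
  obtain ⟨Cb, hCb⟩ := hb
  intro H
  set Λ : Set ℤ := a '' {k : ℕ | 1 ≤ k} ∪ b '' {k : ℕ | 1 ≤ k} with hΛdef
  set C' : ℕ := max ⌈Ca⌉₊ ⌈Cb⌉₊ with hC'
  obtain ⟨q, hq, r₀, havoid⟩ :=
    exists_avoiding (({true, false} : Finset Bool) ×ˢ Finset.Icc (-(C' : ℤ)) (C' : ℤ))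
  have hqC : (q : ℂ) ≠ 0 := Nat.cast_ne_zero.mpr hq.ne'
  have hΛ : ∀ m : ℤ, m ∈ Λ → ((m : ZMod q) ≠ (r₀ : ZMod q)) := by
    rintro m (⟨k, hk, rfl⟩ | ⟨k, hk, rfl⟩) <;> intro hcast
    · have hd : |a k - (k : ℤ) ^ 2| ≤ (C' : ℤ) := by
        have h1 := hCa k hk
        have h2 : Ca ≤ (C' : ℝ) :=
          le_trans (Nat.le_ceil Ca) (by exact_mod_cast le_max_left ⌈Ca⌉₊ ⌈Cb⌉₊)
        exact_mod_cast h1.trans h2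
      have hmem : ((true, a k - (k : ℤ) ^ 2) : Bool × ℤ) ∈
          (({true, false} : Finset Bool) ×ˢ Finset.Icc (-(C' : ℤ)) (C' : ℤ)) :=
        Finset.mem_product.mpr ⟨by simp, Finset.mem_Icc.mpr (abs_le.mp hd)⟩
      refine havoid _ hmem (k : ℤ) ?_
      simpa [show (k : ℤ) ^ 2 + (a k - (k : ℤ) ^ 2) = a k from by ring] using hcast
    · have hd : |b k + (k : ℤ) ^ 2| ≤ (C' : ℤ) := by
        have h1 := hCb k hk
        have h2 : Cb ≤ (C' : ℝ) :=
          le_trans (Nat.le_ceil Cb) (by exact_mod_cast le_max_right ⌈Ca⌉₊ ⌈Cb⌉₊)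
        exact_mod_cast h1.trans h2
      have hmem : ((false, b k + (k : ℤ) ^ 2) : Bool × ℤ) ∈
          (({true, false} : Finset Bool) ×ˢ Finset.Icc (-(C' : ℤ)) (C' : ℤ)) :=
        Finset.mem_product.mpr ⟨by simp, Finset.mem_Icc.mpr (abs_le.mp hd)⟩
      refine havoid _ hmem (k : ℤ) ?_
      simpa [show -(k : ℤ) ^ 2 + (b k + (k : ℤ) ^ 2) = b k from by ring] using hcast
  obtain ⟨c, hc⟩ := H (fun t => fourier r₀ t) ((fourier r₀).continuous.measurable)
  set σf : ℕ → AddCircle (2 * π) := fun j => ((2 * π * j / q : ℝ) : AddCircle (2 * π)) with hσf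
  have hae : ∀ᵐ t : AddCircle (2 * π), ∀ j : ℕ, j ∈ Finset.range q →
      Tendsto (fun N => menshovPartialSum Λ c N (t + σf j)) atTop (𝓝 (fourier r₀ (t + σf j))) := by
    rw [ae_all_iff]
    intro j
    exact (((measurePreserving_add_right volume (σf j)).quasiMeasurePreserving).ae hc).mono
      (fun t h _ => h)
  have hμ : (volume : Measure (AddCircle (2 * π))) ≠ 0 := by
    have h := AddCircle.measure_univ (T := 2 * π)
    intro h0
    rw [h0] at h
    simp at h
    nlinarith [Real.pi_pos]
  haveI : (ae (volume : Measure (AddCircle (2 * π)))).NeBot := ae_neBot.mpr hμ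
  obtain ⟨t, ht⟩ := hae.exists
  have h0 : ∀ N : ℕ, ∑ j ∈ Finset.range q,
      Complex.exp (-(2 * π * Complex.I * r₀ * j / q)) * menshovPartialSum Λ c N (t + σf j) = 0 :=
    fun N => weighted_sum_zero Λ c q hq r₀ hΛ N t
  have hlim : Tendsto (fun N : ℕ => ∑ j ∈ Finset.range q,
      Complex.exp (-(2 * π * Complex.I * r₀ * j / q)) * menshovPartialSum Λ c N (t + σf j)) atTop
      (𝓝 (∑ j ∈ Finset.range q,
        Complex.exp (-(2 * π * Complex.I * r₀ * j / q)) * fourier r₀ (t + σf j))) :=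
    tendsto_finset_sum _ (fun j hj => ((ht j hj).const_mul _))
  rw [show (fun N : ℕ => ∑ j ∈ Finset.range q,
      Complex.exp (-(2 * π * Complex.I * r₀ * j / q)) * menshovPartialSum Λ c N (t + σf j))
      = fun _ => (0 : ℂ) from funext h0] at hlim
  have hzero : (∑ j ∈ Finset.range q,
      Complex.exp (-(2 * π * Complex.I * r₀ * j / q)) * fourier r₀ (t + σf j)) = 0 :=
    tendsto_nhds_unique hlim tendsto_const_nhds
  revert hzero
  induction t using QuotientAddGroup.induction_on with
  | H x =>
  intro hzero
  have hterm : ∀ j ∈ Finset.range q,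
      Complex.exp (-(2 * π * Complex.I * r₀ * j / q)) *
        fourier r₀ ((x : AddCircle (2 * π)) + σf j) = Complex.exp (Complex.I * (r₀ * x)) := by
    intro j _
    have hco : (x : AddCircle (2 * π)) + σf j = ((x + 2 * π * j / q : ℝ) : AddCircle (2 * π)) := rfl
    rw [hco, fourier_real, ← Complex.exp_add]
    congr 1
    push_cast
    field_simp
    ring
  rw [Finset.sum_congr rfl hterm, Finset.sum_const, Finset.card_range] at hzero
  have hne : (q : ℂ) * Complex.exp (Complex.I * (r₀ * x)) = 0 := by
    rw [← nsmul_eq_mul]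
    exact hzero
  exact absurd hne (mul_ne_zero hqC (Complex.exp_ne_zero _))
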